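/- In the Markovian matching algorithm, the number of newly created pairs at step s is at most the number of pairs that were dropped (became unreachable) at step s plus the number of previously unmatched satellites divided by two; consequently, if all pairs from step s−1 remain reachable and all satellites were matched at s−1, the matching at step s equals the matching at step s−1. -/
import Mathlib


open Finset

variable {V : Type*} [Fintype V] [DecidableEq V]

/-- `A` is a matching: no self-pairs and distinct pairs share no endpoints. -/
def IsMatching (A : Finset (V × V)) : Prop :=
  (∀ e ∈ A, e.1 ≠ e.2) ∧
  ∀ e ∈ A, ∀ e' ∈ A, e ≠ e' →
    e.1 ≠ e'.1 ∧ e.1 ≠ e'.2 ∧ e.2 ≠ e'.1 ∧ e.2 ≠ e'.2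

/-- The satellites left unmatched by the matching `A`. -/
def unmatched (A : Finset (V × V)) : Finset V :=
  Finset.univ.filter fun v => ∀ e ∈ A, v ≠ e.1 ∧ v ≠ e.2

/-- Markovian matching step: the new matching `A'` retains every still-reachable pair of
the previous matching `A`, and any newly created pair avoids the retained pairs' endpoints.
Then the number of new pairs is at most the number of dropped (unreachable) pairs plus half
the number of previously unmatched satellites; consequently, if all pairs of `A` remain
reachable and every satellite was matched, the matching is unchanged: `A' = A`. -/
theorem stmt_17 (A A' : Finset (V × V)) (reach : V × V → Prop) [DecidablePred reach]
    (hA : IsMatching A) (hA' : IsMatching A')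
    (hretain : ∀ e ∈ A, reach e → e ∈ A')
    (hnew : ∀ e ∈ A', e ∉ A → ∀ e' ∈ A, reach e' →
      e.1 ≠ e'.1 ∧ e.1 ≠ e'.2 ∧ e.2 ≠ e'.1 ∧ e.2 ≠ e'.2) :
    (A' \ A).card ≤ (A.filter fun e => ¬ reach e).card + (unmatched A).card / 2 ∧
      ((∀ e ∈ A, reach e) → unmatched A = ∅ → A' = A) := by
  set D := A.filter fun e => ¬ reach e with hD
  set S := (A' \ A).biUnion (fun e => ({e.1, e.2} : Finset V)) with hS
  have hScard : S.card = 2 * (A' \ A).card := by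
    rw [hS, card_biUnion]
    · rw [Finset.sum_congr rfl (fun e he => ?_), Finset.sum_const, smul_eq_mul, mul_comm]
      have he' : e ∈ A' := (mem_sdiff.mp he).1
      have : e.1 ≠ e.2 := hA'.1 e he'
      simp [card_insert_of_notMem, this]
    · intro e he f hf hef
      have he' : e ∈ A' := (mem_sdiff.mp he).1
      have hf' : f ∈ A' := (mem_sdiff.mp hf).1
      obtain ⟨h1, h2, h3, h4⟩ := hA'.2 e he' f hf' hef
      simp only [Finset.disjoint_left, mem_insert, mem_singleton]
      rintro v (rfl | rfl) (h | h) <;> simp_all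
  have hsub : S ⊆ D.biUnion (fun e => ({e.1, e.2} : Finset V)) ∪ unmatched A := by
    intro v hv
    rw [hS, mem_biUnion] at hv
    obtain ⟨e, he, hve⟩ := hv
    have he' : e ∈ A' := (mem_sdiff.mp he).1
    have heA : e ∉ A := (mem_sdiff.mp he).2
    by_cases hum : v ∈ unmatched A
    · exact mem_union_right _ hum
    · simp only [unmatched, mem_filter, mem_univ, true_and, not_forall] at hum
      obtain ⟨f, hfA, hvf⟩ := hum
      push_neg at hvf
      have hvf' : v = f.1 ∨ v = f.2 := by tauto
      have hnr : ¬ reach f := by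
        intro hr
        obtain ⟨h1, h2, h3, h4⟩ := hnew e he' heA f hfA hr
        simp only [mem_insert, mem_singleton] at hve
        rcases hve with rfl | rfl <;> rcases hvf' with h | h <;> simp_all
      refine mem_union_left _ (mem_biUnion.mpr ⟨f, ?_, ?_⟩)
      · rw [hD, mem_filter]; exact ⟨hfA, hnr⟩
      · simp only [mem_insert, mem_singleton]; exact hvf'
  have hDcard : (D.biUnion (fun e => ({e.1, e.2} : Finset V))).card ≤ 2 * D.card := by
    calc (D.biUnion (fun e => ({e.1, e.2} : Finset V))).card
        ≤ ∑ e ∈ D, ({e.1, e.2} : Finset V).card := card_biUnion_le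
      _ ≤ ∑ e ∈ D, 2 := Finset.sum_le_sum (fun e _ => card_insert_le _ _ |>.trans (by simp))
      _ = 2 * D.card := by rw [Finset.sum_const, smul_eq_mul, mul_comm]
  have key : 2 * (A' \ A).card ≤ 2 * D.card + (unmatched A).card := by
    calc 2 * (A' \ A).card = S.card := hScard.symm
      _ ≤ (D.biUnion (fun e => ({e.1, e.2} : Finset V)) ∪ unmatched A).card :=
          card_le_card hsub
      _ ≤ _ := (card_union_le _ _).trans (by omega)
  constructor
  · have key2 : 2 * (A' \ A).card ≤
        2 * (A.filter fun e => ¬ reach e).card + (unmatched A).card := by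
      rw [← hD]; exact key
    rw [hD]
    clear * - key2
    omega
  · intro hall hum
    have hD0 : D = ∅ := by
      rw [hD, filter_eq_empty_iff]; intro e he; simp [hall e he]
    have h0 : (A' \ A).card = 0 := by
      have := key
      rw [hD0, hum] at this
      simp only [card_empty] at this; omega
    have hsub1 : A ⊆ A' := fun e he => hretain e he (hall e he)
    have hsub2 : A' ⊆ A := by
      intro e he
      by_contra h
      have : e ∈ A' \ A := mem_sdiff.mpr ⟨he, h⟩
      rw [card_eq_zero] at h0
      simp [h0] at this
    exact Subset.antisymm hsub2 hsub1
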